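/- For a vertex u with label a adjacent to leaves labeled c, c+1, ..., d where a + b = c + d, and a vertex w with label b, the type-1 transfer u → w moving leaves c+k, ..., d-k (for any 0 ≤ k ≤ (d-c+1-l)/2 with l = 2k) to w preserves gracefulness: after deleting the edges from u to these leaves and adding edges from w to them, the resulting tree's labeling is still graceful. -/

import Mathlib

open SimpleGraph

/-- The induced label of an edge: the absolute difference of endpoint labels. -/
def edgeLabel {V : Type*} (f : V → ℕ) : Sym2 V → ℕ :=
  Sym2.lift ⟨fun a b => ((f a : ℤ) - (f b : ℤ)).natAbs,
    fun a b => by dsimp only; omega⟩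

/-- `f` is a graceful labeling of `G`: the vertex labels are exactly
`{0, …, |V| - 1}` and the induced edge labels are pairwise distinct. -/
def GracefulLabeling {V : Type*} [Fintype V] (G : SimpleGraph V) (f : V → ℕ) : Prop :=
  Function.Injective f ∧ (∀ v, f v < Fintype.card V) ∧
    (∀ k, k < Fintype.card V → ∃ v, f v = k) ∧
    Set.InjOn (edgeLabel f) G.edgeSet

/-- The graph obtained from `G` by a transfer `u → w` of the set `L` of leaves:
the edges from `u` to `L` are deleted and edges from `w` to `L` are added. -/
def transferGraph {V : Type*} (G : SimpleGraph V) (u w : V) (L : Set V) :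
    SimpleGraph V :=
  SimpleGraph.fromRel (fun a b =>
    (G.Adj a b ∧ ¬(a = u ∧ b ∈ L) ∧ ¬(b = u ∧ a ∈ L)) ∨
    (a = w ∧ b ∈ L) ∨ (b = w ∧ a ∈ L))

/-!
Vertex labels do not change, so only the edge labels need care. Since `f u + f w = c + d`,
the reflection `n ↦ c + d - n` maps the labels of the moved leaves onto themselves, and the
new edge `w x` has the label of the old edge `u y` to the leaf `y` with `f y = c + d - f x`.
So the multiset of edge labels is unchanged and they stay distinct. The new graph is
connected, and a connected graph with distinct edge labels in `{1, …, |V| - 1}` has at most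
`|V| - 1` edges, hence is a tree.
-/

section Graceful

variable {V : Type*}

@[simp]
lemma edgeLabel_mk (f : V → ℕ) (p q : V) :
    edgeLabel f s(p, q) = ((f p : ℤ) - f q).natAbs :=
  rfl

variable [Fintype V] {G : SimpleGraph V} {f : V → ℕ}

lemma GracefulLabeling.edgeLabel_mem_Icc (hf : GracefulLabeling G f) {e : Sym2 V}
    (he : e ∈ G.edgeSet) : edgeLabel f e ∈ Finset.Icc 1 (Fintype.card V - 1) := by
  induction e using Sym2.ind with
  | _ p q =>
    have hpq : f p ≠ f q := hf.1.ne (G.ne_of_adj he)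
    have hp := hf.2.1 p
    have hq := hf.2.1 q
    simp only [edgeLabel_mk, Finset.mem_Icc]
    omega

lemma GracefulLabeling.isTree_of_connected (hf : GracefulLabeling G f) (hG : G.Connected) :
    G.IsTree := by
  have hV : 0 < Fintype.card V := Fintype.card_pos_iff.2 hG.nonempty
  have hE : Nat.card G.edgeSet ≤ Fintype.card V - 1 := by
    rw [Nat.card_coe_set_eq]
    simpa using Set.ncard_le_ncard_of_injOn (edgeLabel f)
      (fun e he => hf.edgeLabel_mem_Icc he) hf.2.2.2 (Finset.Icc 1 _).finite_toSet
  have hle := hG.card_vert_le_card_edgeSet_add_one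
  rw [Nat.card_eq_fintype_card] at hle
  exact isTree_iff_connected_and_card.2 ⟨hG, by rw [Nat.card_eq_fintype_card (α := V)]; omega⟩

end Graceful

section Transfer

variable {V : Type*} {G : SimpleGraph V} {u w : V} {L : Set V}

lemma transferGraph_adj (hleaf : ∀ x ∈ L, ∀ y, G.Adj x y ↔ y = u) (hwL : w ∉ L) {p q : V} :
    (transferGraph G u w L).Adj p q ↔
      (G.Adj p q ∧ p ∉ L ∧ q ∉ L) ∨ (p = w ∧ q ∈ L) ∨ (q = w ∧ p ∈ L) := by
  simp only [transferGraph, fromRel_adj]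
  grind [G.ne_of_adj, G.adj_symm]

lemma transferGraph_edgeSet_cases (hleaf : ∀ x ∈ L, ∀ y, G.Adj x y ↔ y = u) (hwL : w ∉ L)
    {e : Sym2 V} (he : e ∈ (transferGraph G u w L).edgeSet) :
    (e ∈ G.edgeSet ∧ ∀ x ∈ L, x ∉ e) ∨ ∃ x ∈ L, e = s(w, x) := by
  induction e using Sym2.ind with
  | _ p q =>
    rcases (transferGraph_adj hleaf hwL).1 he with ⟨hpq, hp, hq⟩ | ⟨rfl, hq⟩ | ⟨rfl, hp⟩
    · refine .inl ⟨hpq, fun x hx hxe => ?_⟩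
      rcases Sym2.mem_iff.1 hxe with rfl | rfl <;> contradiction
    · exact .inr ⟨q, hq, rfl⟩
    · exact .inr ⟨p, hp, Sym2.eq_swap⟩

lemma transferGraph_connected (hG : G.Connected) (hleaf : ∀ x ∈ L, ∀ y, G.Adj x y ↔ y = u)
    (hwL : w ∉ L) : (transferGraph G u w L).Connected := by
  classical
  set G' := transferGraph G u w L
  have huL : u ∉ L := fun hu => G.loopless.irrefl u ((hleaf u hu u).2 rfl)
  let φ : V → V := fun x => if x ∈ L then u else x
  have hφ : ∀ {p q}, G.Reachable p q → G'.Reachable (φ p) (φ q) := by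
    rintro p q ⟨W⟩
    induction W with
    | nil => rfl
    | @cons p q r hpq _ ih =>
      refine .trans ?_ ih
      by_cases hp : p ∈ L
      · simp [φ, hp, (hleaf p hp q).1 hpq]
      by_cases hq : q ∈ L
      · simp [φ, hq, (hleaf q hq p).1 hpq.symm]
      simpa [φ, hp, hq] using
        ((transferGraph_adj hleaf hwL).2 (.inl ⟨hpq, hp, hq⟩)).reachable
  have hwu : G'.Reachable w u := by simpa [φ, hwL, huL] using hφ (hG.preconnected w u)
  have hφ_self : ∀ x, G'.Reachable x (φ x) := by
    intro x
    by_cases hx : x ∈ L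
    · have hxw : G'.Adj x w := (transferGraph_adj hleaf hwL).2 (.inr (.inr ⟨rfl, hx⟩))
      simpa [φ, hx] using hxw.reachable.trans hwu
    · simp [φ, hx]
  exact (connected_iff _).2 ⟨fun x y =>
    (hφ_self x).trans ((hφ (hG.preconnected x y)).trans (hφ_self y).symm), hG.nonempty⟩

theorem GracefulLabeling.transfer [Fintype V] {f : V → ℕ} (hf : GracefulLabeling G f)
    (hleaf : ∀ x ∈ L, ∀ y, G.Adj x y ↔ y = u) (hwL : w ∉ L)
    (hmirror : ∀ x ∈ L, ∃ y ∈ L, f x + f y = f u + f w) :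
    GracefulLabeling (transferGraph G u w L) f := by
  refine ⟨hf.1, hf.2.1, hf.2.2.1, ?_⟩
  have huy : ∀ y ∈ L, s(u, y) ∈ G.edgeSet := fun y hy => ((hleaf y hy u).2 rfl).symm
  have hmoved : ∀ x ∈ L, ∃ y ∈ L,
      edgeLabel f s(w, x) = edgeLabel f s(u, y) ∧ f x + f y = f u + f w := by
    intro x hx
    obtain ⟨y, hy, hxy⟩ := hmirror x hx
    exact ⟨y, hy, by simp only [edgeLabel_mk]; omega, hxy⟩
  have hkept : ∀ e ∈ G.edgeSet, (∀ x ∈ L, x ∉ e) →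
      ∀ x ∈ L, edgeLabel f e ≠ edgeLabel f s(w, x) := by
    intro e he heL x hx hlab
    obtain ⟨y, hy, hxy, -⟩ := hmoved x hx
    exact heL y hy (hf.2.2.2 he (huy y hy) (hlab.trans hxy) ▸ Sym2.mem_mk_right u y)
  intro e₁ he₁ e₂ he₂ hlab
  rcases transferGraph_edgeSet_cases hleaf hwL he₁ with ⟨he₁, hL₁⟩ | ⟨x₁, hx₁, rfl⟩ <;>
    rcases transferGraph_edgeSet_cases hleaf hwL he₂ with ⟨he₂, hL₂⟩ | ⟨x₂, hx₂, rfl⟩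
  · exact hf.2.2.2 he₁ he₂ hlab
  · exact absurd hlab (hkept _ he₁ hL₁ x₂ hx₂)
  · exact absurd hlab.symm (hkept _ he₂ hL₂ x₁ hx₁)
  · obtain ⟨y₁, hy₁, hlab₁, hsum₁⟩ := hmoved x₁ hx₁
    obtain ⟨y₂, hy₂, hlab₂, hsum₂⟩ := hmoved x₂ hx₂
    obtain rfl : y₁ = y₂ := Sym2.congr_right.1 <|
      hf.2.2.2 (huy y₁ hy₁) (huy y₂ hy₂) (hlab₁.symm.trans (hlab.trans hlab₂))
    rw [hf.1 (show f x₁ = f x₂ by omega)]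

end Transfer

theorem stmt14_general {V : Type*} [Fintype V] (G : SimpleGraph V)
    [DecidableRel G.Adj] (hT : G.IsTree) (f : V → ℕ)
    (hf : GracefulLabeling G f) (u w : V) (a b c d k : ℕ)
    (ha : f u = a) (hb : f w = b) (hsum : a + b = c + d)
    (hleaves : ∀ n, c ≤ n → n ≤ d → ∃ x, f x = n ∧ G.Adj u x ∧ G.degree x = 1)
    (L : Set V)
    (hL : L = {x | G.Adj u x ∧ G.degree x = 1 ∧ c + k ≤ f x ∧ f x ≤ d - k})
    (hwL : w ∉ L) :
    (transferGraph G u w L).IsTree ∧ GracefulLabeling (transferGraph G u w L) f := by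
  subst ha hb
  have hleaf : ∀ x ∈ L, ∀ y, G.Adj x y ↔ y = u := by
    rw [hL]
    rintro x ⟨hux, hdeg, -⟩ y
    obtain ⟨v, -, hv⟩ := degree_eq_one_iff_existsUnique_adj.1 hdeg
    exact ⟨fun hxy => (hv y hxy).trans (hv u hux.symm).symm, fun h => h ▸ hux.symm⟩
  have hmirror : ∀ x ∈ L, ∃ y ∈ L, f x + f y = f u + f w := by
    rw [hL]
    rintro x ⟨-, -, hlo, hhi⟩
    obtain ⟨y, hy, huy, hdeg⟩ := hleaves (c + d - f x) (by omega) (by omega)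
    exact ⟨y, ⟨huy, hdeg, by omega, by omega⟩, by omega⟩
  have hgraceful := hf.transfer hleaf hwL hmirror
  exact ⟨hgraceful.isTree_of_connected (transferGraph_connected hT.connected hleaf hwL),
    hgraceful⟩

/-- Type-1 transfer: if `u` (labeled `a`) is adjacent to leaves labeled
`c, c+1, …, d`, `w` is labeled `b`, `a + b = c + d`, and `0 ≤ 2k ≤ d - c + 1`,
then moving the leaves labeled `c+k, …, d-k` from `u` to `w` yields a tree on
which the same labeling is still graceful. -/
theorem stmt14 {V : Type*} [Fintype V] [DecidableEq V] (G : SimpleGraph V)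
    [DecidableRel G.Adj] (hT : G.IsTree) (f : V → ℕ)
    (hf : GracefulLabeling G f) (u w : V) (a b c d k : ℕ)
    (ha : f u = a) (hb : f w = b) (hcd : c ≤ d) (hsum : a + b = c + d)
    (hk : 2 * k ≤ d - c + 1)
    (hleaves : ∀ n, c ≤ n → n ≤ d → ∃ x, f x = n ∧ G.Adj u x ∧ G.degree x = 1)
    (L : Set V)
    (hL : L = {x | G.Adj u x ∧ G.degree x = 1 ∧ c + k ≤ f x ∧ f x ≤ d - k})
    (hwL : w ∉ L) (hwu : w ≠ u) :
    (transferGraph G u w L).IsTree ∧ GracefulLabeling (transferGraph G u w L) f :=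
  stmt14_general G hT f hf u w a b c d k ha hb hsum hleaves L hL hwL
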